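/- arXiv:1510.08211 — 4 statements merged into one kernel-verified Lean document; each statement's English description precedes it below -/
import Mathlib

section
/- Let R be a finite (not necessarily unital, not necessarily commutative) ring. Then Pr(R) ≥ (1/|K(R, R)|) · (1 + (|K(R, R)| − 1)/|R : Z(R)|). In particular, if R is non-commutative then Pr(R) > 1/|K(R, R)|. -/
open scoped Pointwise

/-- The probability that a randomly chosen pair, one element from `S` and one from `T`,
commutes (multiplicatively). For a subring `S` of a finite ring `R` this gives
`Pr(S, R) = relCommProb R S Set.univ`, `Pr(R) = relCommProb R Set.univ Set.univ`, etc. -/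
noncomputable def relCommProb (R : Type*) [NonUnitalRing R] (S T : Set R) : ℚ :=
  (Nat.card {p : S × T // (p.1 : R) * (p.2 : R) = (p.2 : R) * (p.1 : R)} : ℚ) /
    ((Nat.card S : ℚ) * (Nat.card T : ℚ))

/-- `C_S(r)`: the centralizer of `r` in the subring `S`, as an additive subgroup of `R`.
Taking `S = ⊤` gives `C_R(r)`. -/
def centIn {R : Type*} [NonUnitalRing R] (S : NonUnitalSubring R) (r : R) : AddSubgroup R where
  carrier := {x | x ∈ S ∧ x * r = r * x}
  zero_mem' := ⟨S.zero_mem, by rw [zero_mul, mul_zero]⟩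
  add_mem' := by
    rintro a b ⟨ha, ha'⟩ ⟨hb, hb'⟩
    exact ⟨S.add_mem ha hb, by rw [add_mul, mul_add, ha', hb']⟩
  neg_mem' := by
    rintro a ⟨ha, ha'⟩
    exact ⟨S.neg_mem ha, by rw [neg_mul, mul_neg, ha']⟩

/-- `Z(S, R)`: the elements of the subring `S` commuting with every element of `R`,
as an additive subgroup of `R`.  Taking `S = ⊤` gives the center `Z(R)`. -/
def zCenter {R : Type*} [NonUnitalRing R] (S : NonUnitalSubring R) : AddSubgroup R where
  carrier := {x | x ∈ S ∧ ∀ r : R, x * r = r * x}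
  zero_mem' := ⟨S.zero_mem, fun r => by rw [zero_mul, mul_zero]⟩
  add_mem' := by
    rintro a b ⟨ha, ha'⟩ ⟨hb, hb'⟩
    exact ⟨S.add_mem ha hb, fun r => by rw [add_mul, mul_add, ha' r, hb' r]⟩
  neg_mem' := by
    rintro a ⟨ha, ha'⟩
    exact ⟨S.neg_mem ha, fun r => by rw [neg_mul, mul_neg, ha' r]⟩

/-- `K(S, R)`: the set of additive commutators `s*r - r*s` with `s ∈ S`, `r ∈ R`. -/
def kSet {R : Type*} [NonUnitalRing R] (S : NonUnitalSubring R) : Set R :=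
  {x | ∃ s ∈ S, ∃ r : R, x = s * r - r * s}

/-- `[S, R]`: the additive subgroup of `(R, +)` generated by `K(S, R)`. -/
def commSub {R : Type*} [NonUnitalRing R] (S : NonUnitalSubring R) : AddSubgroup R :=
  AddSubgroup.closure (kSet S)

/-- `[x, R]`: the additive subgroup of all commutators `x*y - y*x`, `y ∈ R`. -/
def elemComm {R : Type*} [NonUnitalRing R] (x : R) : AddSubgroup R where
  carrier := {z | ∃ y : R, z = x * y - y * x}
  zero_mem' := ⟨0, by simp⟩
  add_mem' := by
    rintro a b ⟨y, rfl⟩ ⟨z, rfl⟩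
    exact ⟨y + z, by rw [mul_add, add_mul]; abel⟩
  neg_mem' := by
    rintro a ⟨y, rfl⟩
    exact ⟨-y, by rw [mul_neg, neg_mul]; abel⟩

/-!
Counting commuting pairs row by row gives `|R|² Pr(R) = ∑ₓ |C_R(x)|`. The additive map
`y ↦ xy - yx` has kernel `C_R(x)` and image `[x, R] ⊆ K(R, R)`, so
`|C_R(x)| ≥ |R| / |K(R, R)|` for every `x`, while `|C_R(x)| = |R|` for the `|R| / |R : Z(R)|`
central elements.
-/

section

variable {R : Type*} [NonUnitalRing R]

def commutatorHom (x : R) : R →+ R :=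
  AddMonoidHom.mulLeft x - AddMonoidHom.mulRight x

lemma ker_commutatorHom (x : R) : (commutatorHom x).ker = centIn ⊤ x := by
  ext y
  simp [commutatorHom, centIn, sub_eq_zero, eq_comm]

lemma range_commutatorHom (x : R) : (commutatorHom x).range = elemComm x := by
  ext z
  simp [commutatorHom, elemComm, eq_comm]

lemma card_centIn_mul_card_elemComm (x : R) :
    Nat.card (centIn ⊤ x) * Nat.card (elemComm x) = Nat.card R := by
  rw [← ker_commutatorHom, ← range_commutatorHom, ← AddSubgroup.index_ker]
  exact AddSubgroup.card_mul_index _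

lemma coe_elemComm_subset_kSet (x : R) : (elemComm x : Set R) ⊆ kSet ⊤ := by
  rintro _ ⟨y, rfl⟩
  exact ⟨x, trivial, y, rfl⟩

lemma zero_mem_kSet (S : NonUnitalSubring R) : (0 : R) ∈ kSet S :=
  ⟨0, S.zero_mem, 0, by simp⟩

lemma card_kSet_pos [Finite R] (S : NonUnitalSubring R) : 0 < Nat.card (kSet S) :=
  have : Nonempty (kSet S) := ⟨⟨0, zero_mem_kSet S⟩⟩
  Nat.card_pos

lemma card_le_card_kSet_mul_card_centIn [Finite R] (x : R) :
    Nat.card R ≤ Nat.card (kSet (⊤ : NonUnitalSubring R)) * Nat.card (centIn ⊤ x) := by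
  rw [← card_centIn_mul_card_elemComm x, mul_comm]
  exact Nat.mul_le_mul_right _ (Nat.card_mono (Set.toFinite _) (coe_elemComm_subset_kSet x))

lemma centIn_top_eq_top_of_mem_zCenter {x : R} (hx : x ∈ zCenter ⊤) : centIn ⊤ x = ⊤ :=
  eq_top_iff.2 fun y _ => ⟨trivial, (hx.2 y).symm⟩

lemma one_lt_card_kSet [Finite R] {a b : R} (hab : a * b ≠ b * a) :
    1 < Nat.card (kSet (⊤ : NonUnitalSubring R)) := by
  rw [Nat.card_coe_set_eq, Set.one_lt_ncard]
  exact ⟨_, ⟨a, trivial, b, rfl⟩, 0, zero_mem_kSet ⊤, sub_ne_zero.2 hab⟩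

lemma relCommProb_univ_univ [Fintype R] :
    relCommProb R Set.univ Set.univ =
      (∑ x : R, (Nat.card (centIn ⊤ x) : ℚ)) / (Nat.card R : ℚ) ^ 2 := by
  have commuting_pairs_equiv :
      {p : ↥(Set.univ : Set R) × ↥(Set.univ : Set R) // (p.1 : R) * p.2 = p.2 * p.1} ≃
        Σ x : R, centIn ⊤ x :=
    (Equiv.subtypeEquiv ((Equiv.Set.univ R).prodCongr (Equiv.Set.univ R)) fun _ => Iff.rfl).trans <|
      (Equiv.subtypeProdEquivSigmaSubtype fun x y : R => x * y = y * x).trans <|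
        .sigmaCongrRight fun x => .subtypeEquivRight fun y => by simp [centIn, eq_comm]
  rw [relCommProb, Nat.card_congr commuting_pairs_equiv, Nat.card_sigma, Nat.card_univ, sq]
  push_cast
  rfl

lemma le_sum_card_centIn [Fintype R] :
    (Nat.card R : ℚ) ^ 2 / Nat.card (kSet (⊤ : NonUnitalSubring R)) +
        Nat.card (zCenter (⊤ : NonUnitalSubring R)) *
          (Nat.card R - Nat.card R / Nat.card (kSet (⊤ : NonUnitalSubring R))) ≤
      ∑ x : R, (Nat.card (centIn ⊤ x) : ℚ) := by
  classical
  have hk : (0 : ℚ) < Nat.card (kSet (⊤ : NonUnitalSubring R)) := mod_cast card_kSet_pos ⊤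
  have noncentral_bound (x : R) :
      (Nat.card R : ℚ) ≤ Nat.card (kSet (⊤ : NonUnitalSubring R)) * Nat.card (centIn ⊤ x) :=
    mod_cast card_le_card_kSet_mul_card_centIn x
  set n : ℚ := (Nat.card R : ℚ)
  set k : ℚ := (Nat.card (kSet (⊤ : NonUnitalSubring R)) : ℚ)
  have pointwise (x : R) :
      n / k + (if x ∈ zCenter ⊤ then n - n / k else 0) ≤ Nat.card (centIn ⊤ x) := by
    split_ifs with hx
    · simp [centIn_top_eq_top_of_mem_zCenter hx, n]
    · rw [add_zero, div_le_iff₀ hk, mul_comm]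
      exact noncentral_bound x
  calc n ^ 2 / k + Nat.card (zCenter (⊤ : NonUnitalSubring R)) * (n - n / k)
      = ∑ x : R, (n / k + if x ∈ zCenter ⊤ then n - n / k else 0) := by
        rw [Finset.sum_add_distrib, ← Finset.sum_filter, Finset.sum_const, Finset.sum_const]
        simp only [Nat.card_eq_fintype_card, Fintype.card_subtype, Finset.card_univ, nsmul_eq_mul,
          add_left_inj, n]
        ring
    _ ≤ _ := Finset.sum_le_sum fun x _ => pointwise x

end

/-- `Pr(R) ≥ (1/|K(R, R)|)(1 + (|K(R, R)| − 1)/|R : Z(R)|)`; in particular, if `R` is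
non-commutative then `Pr(R) > 1/|K(R, R)|`. -/
theorem commProb_ge_kSet {R : Type*} [NonUnitalRing R] [Fintype R] :
    relCommProb R Set.univ Set.univ ≥
      (1 / (Nat.card (kSet (⊤ : NonUnitalSubring R)) : ℚ)) *
        (1 + ((Nat.card (kSet (⊤ : NonUnitalSubring R)) : ℚ) - 1) /
          ((zCenter (⊤ : NonUnitalSubring R)).index : ℚ)) ∧
    ((∃ a b : R, a * b ≠ b * a) →
      relCommProb R Set.univ Set.univ >
        1 / (Nat.card (kSet (⊤ : NonUnitalSubring R)) : ℚ)) := by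
  have hn : (0 : ℚ) < Nat.card R := mod_cast Nat.card_pos
  have hk : (0 : ℚ) < Nat.card (kSet (⊤ : NonUnitalSubring R)) := mod_cast card_kSet_pos ⊤
  have hi : (0 : ℚ) < (zCenter (⊤ : NonUnitalSubring R)).index :=
    mod_cast Nat.pos_of_ne_zero AddSubgroup.index_ne_zero_of_finite
  have index_mul_card : ((zCenter (⊤ : NonUnitalSubring R)).index : ℚ) *
      Nat.card (zCenter (⊤ : NonUnitalSubring R)) = Nat.card R :=
    mod_cast AddSubgroup.index_mul_card _
  have main : relCommProb R Set.univ Set.univ ≥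
      (1 / (Nat.card (kSet (⊤ : NonUnitalSubring R)) : ℚ)) *
        (1 + ((Nat.card (kSet (⊤ : NonUnitalSubring R)) : ℚ) - 1) /
          ((zCenter (⊤ : NonUnitalSubring R)).index : ℚ)) := by
    rw [ge_iff_le, relCommProb_univ_univ, le_div_iff₀ (by positivity)]
    refine le_of_eq_of_le ?_ le_sum_card_centIn
    rw [← index_mul_card]
    field_simp
  refine ⟨main, fun ⟨a, b, hab⟩ => lt_of_lt_of_le ?_ main⟩
  have hk1 : (1 : ℚ) < Nat.card (kSet (⊤ : NonUnitalSubring R)) := mod_cast one_lt_card_kSet hab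
  exact lt_mul_of_one_lt_right (by positivity) (lt_add_of_pos_right _ (div_pos (by linarith) hi))
end

section
/- Let R be a finite (not necessarily unital, not necessarily commutative) ring. Then Pr(R) ≥ (1/|[R, R]|) · (1 + (|[R, R]| − 1)/|R : Z(R)|). In particular, if R is non-commutative then Pr(R) > 1/|[R, R]|. -/
open scoped Pointwise

section AuxCommProb

variable {R : Type*} [NonUnitalRing R]

/-- The additive homomorphism `y ↦ x*y - y*x`. -/
def commMap (x : R) : R →+ R :=
  AddMonoidHom.mk' (fun y => x * y - y * x) (fun a b => by
    show x * (a + b) - (a + b) * x = _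
    rw [mul_add, add_mul]; abel)

lemma commMap_range_le (x : R) :
    (commMap x).range ≤ commSub (⊤ : NonUnitalSubring R) := by
  rintro z ⟨y, rfl⟩
  exact AddSubgroup.subset_closure ⟨x, NonUnitalSubring.mem_top x, y, rfl⟩

variable [Fintype R]

lemma ker_mul_range (x : R) :
    Nat.card (commMap x).ker * Nat.card (commMap x).range = Fintype.card R := by
  rw [mul_comm, ← Nat.card_eq_fintype_card,
    AddSubgroup.card_eq_card_quotient_mul_card_addSubgroup (commMap x).ker,
    Nat.card_congr (QuotientAddGroup.quotientKerEquivRange (commMap x)).toEquiv]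

lemma ker_card_of_center {x : R} (hx : x ∈ zCenter (⊤ : NonUnitalSubring R)) :
    Nat.card (commMap x).ker = Fintype.card R := by
  have : (commMap x).ker = ⊤ := by
    ext y
    simp only [AddMonoidHom.mem_ker, AddSubgroup.mem_top, iff_true]
    show x * y - y * x = 0
    rw [hx.2 y, sub_self]
  rw [this, ← Nat.card_eq_fintype_card]
  exact Nat.card_congr AddSubgroup.topEquiv.toEquiv

end AuxCommProb

/-- `Pr(R) ≥ (1/|[R, R]|)(1 + (|[R, R]| − 1)/|R : Z(R)|)`; in particular, if `R` is
non-commutative then `Pr(R) > 1/|[R, R]|`. -/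
theorem commProb_ge_commSub {R : Type*} [NonUnitalRing R] [Fintype R] :
    relCommProb R Set.univ Set.univ ≥
      (1 / (Nat.card (commSub (⊤ : NonUnitalSubring R)) : ℚ)) *
        (1 + ((Nat.card (commSub (⊤ : NonUnitalSubring R)) : ℚ) - 1) /
          ((zCenter (⊤ : NonUnitalSubring R)).index : ℚ)) ∧
    ((∃ a b : R, a * b ≠ b * a) →
      relCommProb R Set.univ Set.univ >
        1 / (Nat.card (commSub (⊤ : NonUnitalSubring R)) : ℚ)) := by
  classical
  set k := Nat.card (commSub (⊤ : NonUnitalSubring R)) with hk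
  set Z := zCenter (⊤ : NonUnitalSubring R) with hZ
  set nR := Fintype.card R with hnR
  set nZ := Nat.card Z with hnZ
  set idx := Z.index with hidx
  -- basic positivity
  have hnRpos : 0 < nR := Fintype.card_pos
  have hkpos : 0 < k := Nat.card_pos
  have hnZpos : 0 < nZ := Nat.card_pos
  have hidxZ : idx * nZ = nR := by
    rw [hidx, hnZ, hnR, ← Nat.card_eq_fintype_card]
    exact AddSubgroup.index_mul_card Z
  have hidxpos : 0 < idx := by
    rcases Nat.eq_zero_or_pos idx with h | h
    · exfalso; rw [h, zero_mul] at hidxZ; omega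
    · exact h
  -- the count of commuting pairs
  set S : ℕ := ∑ x : R, Nat.card (commMap x).ker with hS
  have hcount : Nat.card {p : ↥(Set.univ : Set R) × ↥(Set.univ : Set R) //
      (p.1 : R) * (p.2 : R) = (p.2 : R) * (p.1 : R)} = S := by
    have e1 : {p : ↥(Set.univ : Set R) × ↥(Set.univ : Set R) //
        (p.1 : R) * (p.2 : R) = (p.2 : R) * (p.1 : R)} ≃
        {p : R × R // p.1 * p.2 = p.2 * p.1} :=
      Equiv.subtypeEquiv ((Equiv.Set.univ R).prodCongr (Equiv.Set.univ R)) (fun p => Iff.rfl)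
    have e2 : {p : R × R // p.1 * p.2 = p.2 * p.1} ≃
        Σ x : R, {y : R // x * y = y * x} :=
      Equiv.subtypeProdEquivSigmaSubtype (fun a b : R => a * b = b * a)
    have e3 : ∀ x : R, {y : R // x * y = y * x} ≃ (commMap x).ker := fun x =>
      Equiv.subtypeEquivRight fun y => by
        rw [AddMonoidHom.mem_ker]
        show x * y = y * x ↔ x * y - y * x = 0
        rw [sub_eq_zero, eq_comm]
    rw [Nat.card_congr (e1.trans e2), Nat.card_eq_fintype_card, Fintype.card_sigma, hS]
    exact Finset.sum_congr rfl fun x _ => by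
      rw [← Nat.card_eq_fintype_card, Nat.card_congr (e3 x)]
  -- Pr(R) as a fraction
  have hPr : relCommProb R Set.univ Set.univ = (S : ℚ) / ((nR : ℚ) * (nR : ℚ)) := by
    have hu : Nat.card ↥(Set.univ : Set R) = nR := by
      rw [Nat.card_congr (Equiv.Set.univ R), Nat.card_eq_fintype_card]
    rw [relCommProb, hcount, hu]
  -- key lower bound for each kernel
  have hker_lb : ∀ x : R, nR ≤ Nat.card (commMap x).ker * k := fun x => by
    calc nR = Nat.card (commMap x).ker * Nat.card (commMap x).range := (ker_mul_range x).symm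
    _ ≤ Nat.card (commMap x).ker * k :=
      Nat.mul_le_mul_left _ (AddSubgroup.card_le_of_le (commMap_range_le x))
  -- the main counting inequality over ℕ
  have hZcard : (Finset.univ.filter (fun x : R => x ∈ Z)).card = nZ := by
    rw [hnZ, Nat.card_eq_fintype_card, Fintype.card_subtype]
  have hmain : nR * nR + (k - 1) * nZ * nR ≤ k * S := by
    have hsplit : ∀ x : R, (if x ∈ Z then nR * k else nR) ≤ Nat.card (commMap x).ker * k := by
      intro x
      by_cases hx : x ∈ Z
      · simp only [hx, if_true]
        rw [ker_card_of_center hx]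
      · simp only [hx, if_false]
        exact hker_lb x
    calc nR * nR + (k - 1) * nZ * nR
        ≤ ∑ x : R, (if x ∈ Z then nR * k else nR) := by
          rw [Finset.sum_ite, Finset.sum_const, Finset.sum_const, hZcard]
          have h2 : (Finset.univ.filter (fun x : R => ¬ x ∈ Z)).card = nR - nZ := by
            have := Finset.card_filter_add_card_filter_not
              (s := (Finset.univ : Finset R)) (p := fun x : R => x ∈ Z)
            rw [Finset.card_univ, ← hnR, hZcard] at this
            omega
          rw [h2, smul_eq_mul, smul_eq_mul]
          have hnZle : nZ ≤ nR := by
            calc nZ = (Finset.univ.filter (fun x : R => x ∈ Z)).card := hZcard.symm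
            _ ≤ (Finset.univ : Finset R).card := Finset.card_filter_le _ _
            _ = nR := Finset.card_univ
          have h1 : 1 ≤ k := hkpos
          obtain ⟨d, hd⟩ := Nat.exists_eq_add_of_le hnZle
          obtain ⟨e, he⟩ := Nat.exists_eq_add_of_le h1
          have h3 : k - 1 = e := by omega
          have h4 : nR - nZ = d := by omega
          rw [h3, h4, hd, he]
          exact le_of_eq (by ring)
      _ ≤ ∑ x : R, Nat.card (commMap x).ker * k := Finset.sum_le_sum fun x _ => hsplit x
      _ = k * S := by
          rw [hS, Finset.mul_sum]
          exact Finset.sum_congr rfl fun x _ => by ring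
  -- move to ℚ
  have hkQ : (0:ℚ) < (k:ℚ) := by exact_mod_cast hkpos
  have hnRQ : (0:ℚ) < (nR:ℚ) := by exact_mod_cast hnRpos
  have hidxQ : (0:ℚ) < (idx:ℚ) := by exact_mod_cast hidxpos
  have hidxZQ : (idx:ℚ) * (nZ:ℚ) = (nR:ℚ) := by exact_mod_cast hidxZ
  have hmainQ : (nR:ℚ) * nR + ((k:ℚ) - 1) * nZ * nR ≤ (k:ℚ) * S := by
    have h1 : 1 ≤ k := hkpos
    have := hmain
    have hcast : ((k - 1 : ℕ) : ℚ) = (k:ℚ) - 1 := by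
      rw [Nat.cast_sub h1]; norm_num
    calc (nR:ℚ) * nR + ((k:ℚ) - 1) * nZ * nR
        = ((nR * nR + (k - 1) * nZ * nR : ℕ) : ℚ) := by push_cast [hcast]; ring
      _ ≤ ((k * S : ℕ) : ℚ) := by exact_mod_cast this
      _ = (k:ℚ) * S := by push_cast; ring
  have hnZQ : (0:ℚ) < (nZ:ℚ) := by exact_mod_cast hnZpos
  have hA : (1 / (k : ℚ)) * (1 + ((k : ℚ) - 1) / (idx : ℚ))
      = ((nR:ℚ) + ((k:ℚ) - 1) * nZ) / ((k:ℚ) * nR) := by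
    rw [← hidxZQ]
    field_simp
  have part1 : relCommProb R Set.univ Set.univ ≥
      (1 / (k : ℚ)) * (1 + ((k : ℚ) - 1) / (idx : ℚ)) := by
    rw [hPr, ge_iff_le, hA, div_le_div_iff₀ (by positivity) (by positivity)]
    nlinarith [mul_le_mul_of_nonneg_right hmainQ hnRQ.le]
  refine ⟨part1, fun ⟨a, b, hab⟩ => ?_⟩
  have hk2 : 2 ≤ k := by
    rw [hk]
    refine (AddSubgroup.one_lt_card_iff_ne_bot _).mpr ?_
    intro hbot
    apply hab
    have : a * b - b * a ∈ commSub (⊤ : NonUnitalSubring R) :=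
      AddSubgroup.subset_closure ⟨a, NonUnitalSubring.mem_top a, b, rfl⟩
    rw [hbot, AddSubgroup.mem_bot, sub_eq_zero] at this
    exact this
  have hk2Q : (2:ℚ) ≤ (k:ℚ) := by exact_mod_cast hk2
  have ht : (0:ℚ) < ((k : ℚ) - 1) / (idx : ℚ) := by
    apply div_pos (by linarith) hidxQ
  have h1k : (0:ℚ) < 1 / (k:ℚ) := by positivity
  calc relCommProb R Set.univ Set.univ
      ≥ (1 / (k : ℚ)) * (1 + ((k : ℚ) - 1) / (idx : ℚ)) := part1
    _ > 1 / (k:ℚ) := by nlinarith [mul_pos h1k ht]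
end

section
/- Let R₁ and R₂ be (not necessarily unital, not necessarily commutative) rings with subrings S₁ and S₂ respectively, and suppose (φ, ψ) is a ℤ-isoclinism from the pair (S₁, R₁) to the pair (S₂, R₂). If s₁ ∈ S₁ and s₂ ∈ S₂ satisfy φ(s₁ + Z(S₁, R₁)) = s₂ + Z(S₂, R₂), then the additive groups [s₁, R₁] and [s₂, R₂] are isomorphic. -/
open scoped Pointwise

/-- An additive commutator `u*v - v*u` with `u ∈ S` lies in `[S, R]`. -/
lemma comm_mem_commSub {R : Type*} [NonUnitalRing R] (S : NonUnitalSubring R) {u : R}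
    (hu : u ∈ S) (v : R) : u * v - v * u ∈ commSub S :=
  AddSubgroup.subset_closure ⟨u, hu, v, rfl⟩

/-- A `ℤ`-isoclinism between the pairs `(S₁, R₁)` and `(S₂, R₂)`: a pair `(φ, ψ)` of additive
group isomorphisms `φ : R₁/Z(S₁, R₁) ≃+ R₂/Z(S₂, R₂)` and `ψ : [S₁, R₁] ≃+ [S₂, R₂]` such
that `φ` maps `S₁/Z(S₁, R₁)` onto `S₂/Z(S₂, R₂)` and `ψ([u, v]) = [u', v']` whenever
`φ(u + Z(S₁, R₁)) = u' + Z(S₂, R₂)` and `φ(v + Z(S₁, R₁)) = v' + Z(S₂, R₂)` with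
`u ∈ S₁`, `u' ∈ S₂`. -/
structure ZIsoclinism {R₁ R₂ : Type*} [NonUnitalRing R₁] [NonUnitalRing R₂]
    (S₁ : NonUnitalSubring R₁) (S₂ : NonUnitalSubring R₂) where
  φ : (R₁ ⧸ zCenter S₁) ≃+ (R₂ ⧸ zCenter S₂)
  ψ : commSub S₁ ≃+ commSub S₂
  φ_maps : Set.image φ ((QuotientAddGroup.mk : R₁ → R₁ ⧸ zCenter S₁) '' (S₁ : Set R₁)) =
    (QuotientAddGroup.mk : R₂ → R₂ ⧸ zCenter S₂) '' (S₂ : Set R₂)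
  compat : ∀ (u : R₁) (hu : u ∈ S₁) (v : R₁) (u' : R₂) (_ : u' ∈ S₂) (v' : R₂),
    φ (QuotientAddGroup.mk u) = QuotientAddGroup.mk u' →
    φ (QuotientAddGroup.mk v) = QuotientAddGroup.mk v' →
    (ψ ⟨u * v - v * u, comm_mem_commSub S₁ hu v⟩ : R₂) = u' * v' - v' * u'

/-- If `(φ, ψ)` is a `ℤ`-isoclinism from `(S₁, R₁)` to `(S₂, R₂)` and
`φ(s₁ + Z(S₁, R₁)) = s₂ + Z(S₂, R₂)` with `s₁ ∈ S₁`, `s₂ ∈ S₂`, then the additive groups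
`[s₁, R₁]` and `[s₂, R₂]` are isomorphic. -/
theorem elemComm_iso_of_zIsoclinism {R₁ R₂ : Type*} [NonUnitalRing R₁] [NonUnitalRing R₂]
    (S₁ : NonUnitalSubring R₁) (S₂ : NonUnitalSubring R₂) (e : ZIsoclinism S₁ S₂)
    (s₁ : R₁) (hs₁ : s₁ ∈ S₁) (s₂ : R₂) (hs₂ : s₂ ∈ S₂)
    (h : e.φ (QuotientAddGroup.mk s₁) = QuotientAddGroup.mk s₂) :
    Nonempty (elemComm s₁ ≃+ elemComm s₂) := by
  have hle : ∀ z ∈ elemComm s₁, z ∈ commSub S₁ := by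
    rintro z ⟨y, rfl⟩; exact comm_mem_commSub S₁ hs₁ y
  -- forward map
  have key : ∀ (z : R₁) (hz : z ∈ elemComm s₁),
      (e.ψ ⟨z, hle z hz⟩ : R₂) ∈ elemComm s₂ := by
    rintro z ⟨v, rfl⟩
    obtain ⟨v', hv'⟩ := QuotientAddGroup.mk_surjective (e.φ (QuotientAddGroup.mk v))
    refine ⟨v', ?_⟩
    exact e.compat s₁ hs₁ v s₂ hs₂ v' h hv'.symm
  have key2 : ∀ (w : R₂) (hw : w ∈ elemComm s₂), ∃ (z : R₁) (hz : z ∈ elemComm s₁),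
      (e.ψ ⟨z, hle z hz⟩ : R₂) = w := by
    rintro w ⟨v', rfl⟩
    obtain ⟨q, hq⟩ := e.φ.surjective (QuotientAddGroup.mk v')
    obtain ⟨v, rfl⟩ := QuotientAddGroup.mk_surjective q
    exact ⟨s₁ * v - v * s₁, ⟨v, rfl⟩, e.compat s₁ hs₁ v s₂ hs₂ v' h hq⟩
  have hle' : elemComm s₁ ≤ commSub S₁ := hle
  let F : elemComm s₁ →+ elemComm s₂ :=
    AddMonoidHom.codRestrict
      ((commSub S₂).subtype.comp (e.ψ.toAddMonoidHom.comp (AddSubgroup.inclusion hle')))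
      (elemComm s₂) (fun z => key z.1 z.2)
  have hinj : Function.Injective F := by
    rintro ⟨a, ha⟩ ⟨b, hb⟩ hab
    have h1 := Subtype.ext_iff.mp hab
    have h2 : (⟨a, hle' ha⟩ : commSub S₁) = ⟨b, hle' hb⟩ := e.ψ.injective (Subtype.ext h1)
    exact Subtype.ext (show a = b from congrArg Subtype.val h2)
  have hsurj : Function.Surjective F := by
    rintro ⟨w, hw⟩
    obtain ⟨z, hz, hzw⟩ := key2 w hw
    exact ⟨⟨z, hz⟩, Subtype.ext hzw⟩
  exact ⟨AddEquiv.ofBijective F ⟨hinj, hsurj⟩⟩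
end

section
/- Let R₁ and R₂ be finite (not necessarily unital, not necessarily commutative) rings with subrings S₁ and S₂ respectively. If there exists a ℤ-isoclinism (φ, ψ) from the pair (S₁, R₁) to the pair (S₂, R₂), then Pr(S₁, R₁) = Pr(S₂, R₂). -/
open scoped Pointwise

/-! Commutation in `R` only depends on classes modulo `Z(S, R)`, so the commuting pairs of `S × R`
form full cosets of `Z(S, R)²`, and `Pr(S, R)` can be computed in `R/Z(S, R)` after cancelling
`|Z(S, R)|²`.  There, `φ × φ` matches the commuting pairs of both sides, because `ψ` is injective
and sends `[u, v]` to `[u', v']`. -/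

theorem AddMonoidHom.card_preimage_of_surjective {A B : Type*} [AddGroup A] [AddGroup B]
    (f : A →+ B) (hf : Function.Surjective f) (t : Set B) :
    Nat.card (f ⁻¹' t) = Nat.card f.ker * Nat.card t := by
  let e := QuotientAddGroup.quotientKerEquivOfSurjective f hf
  have hpre : f ⁻¹' t = QuotientAddGroup.mk ⁻¹' (e ⁻¹' t) := rfl
  rw [hpre, Nat.card_congr (QuotientAddGroup.preimageMkEquivAddSubgroupProdSet _ _),
    Nat.card_prod, Nat.card_preimage_of_injective e.injective (by simp [e.surjective.range_eq])]

section QuotientByZCenter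

variable {R : Type*} [NonUnitalRing R] (S : NonUnitalSubring R)

def quotCommPairs : Set ((R ⧸ zCenter S) × (R ⧸ zCenter S)) :=
  {q | ∃ u ∈ S, ∃ v : R, (u : R ⧸ zCenter S) = q.1 ∧ (v : R ⧸ zCenter S) = q.2 ∧ u * v = v * u}

variable {S}

theorem mem_of_mk_eq_zCenter {a u : R} (h : (a : R ⧸ zCenter S) = u) (hu : u ∈ S) : a ∈ S := by
  have hz : -a + u ∈ S := (QuotientAddGroup.eq.1 h).1
  simpa using S.sub_mem hu hz

theorem mul_sub_mul_eq_of_mk_eq_zCenter {a b u v : R} (ha : (a : R ⧸ zCenter S) = u)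
    (hb : (b : R ⧸ zCenter S) = v) : a * b - b * a = u * v - v * u := by
  obtain ⟨-, hz⟩ : -a + u ∈ zCenter S := QuotientAddGroup.eq.1 ha
  obtain ⟨-, hw⟩ : -b + v ∈ zCenter S := QuotientAddGroup.eq.1 hb
  obtain ⟨z, rfl⟩ : ∃ z, u = a + z := ⟨-a + u, by abel⟩
  obtain ⟨w, rfl⟩ : ∃ w, v = b + w := ⟨-b + v, by abel⟩
  simp only [neg_add_cancel_left] at hz hw
  simp only [add_mul, mul_add, hz, hw a]
  abel

theorem preimage_quotCommPairs :
    (QuotientAddGroup.mk' (zCenter S)).prodMap (QuotientAddGroup.mk' (zCenter S)) ⁻¹'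
        quotCommPairs S = {p : R × R | p.1 ∈ S ∧ p.1 * p.2 = p.2 * p.1} := by
  ext ⟨a, b⟩
  constructor
  · rintro ⟨u, hu, v, hua : (u : R ⧸ zCenter S) = a, hvb : (v : R ⧸ zCenter S) = b, huv⟩
    refine ⟨mem_of_mk_eq_zCenter hua.symm hu, sub_eq_zero.1 ?_⟩
    rw [mul_sub_mul_eq_of_mk_eq_zCenter hua.symm hvb.symm, huv, sub_self]
  · rintro ⟨ha, hab⟩
    exact ⟨a, ha, b, rfl, rfl, hab⟩

theorem preimage_image_mk_zCenter :
    QuotientAddGroup.mk' (zCenter S) ⁻¹' (QuotientAddGroup.mk '' (S : Set R)) = S := by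
  ext a
  constructor
  · rintro ⟨u, hu, hua⟩
    exact mem_of_mk_eq_zCenter hua.symm hu
  · intro ha
    exact ⟨a, ha, rfl⟩

theorem relCommProb_univ_eq_card_quotient [Finite R] :
    relCommProb R (S : Set R) Set.univ =
      (Nat.card (quotCommPairs S) : ℚ) /
        ((Nat.card (QuotientAddGroup.mk '' (S : Set R) : Set (R ⧸ zCenter S)) : ℚ) *
          (Nat.card (R ⧸ zCenter S) : ℚ)) := by
  let π := QuotientAddGroup.mk' (zCenter S)
  have hπ : Function.Surjective π := QuotientAddGroup.mk'_surjective _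
  have hpairs : Nat.card {p : ↥(S : Set R) × ↥(Set.univ : Set R) // (p.1 : R) * p.2 = p.2 * p.1} =
      Nat.card (zCenter S) * Nat.card (zCenter S) * Nat.card (quotCommPairs S) := by
    have h := (π.prodMap π).card_preimage_of_surjective (Prod.map_surjective.2 ⟨hπ, hπ⟩)
      (quotCommPairs S)
    rw [AddMonoidHom.ker_prodMap, QuotientAddGroup.ker_mk', preimage_quotCommPairs,
      Nat.card_congr (AddSubgroup.prodEquiv _ _).toEquiv, Nat.card_prod] at h
    rw [← h]
    exact Nat.card_congr
      { toFun p := ⟨(p.1.1, p.1.2), p.1.1.2, p.2⟩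
        invFun p := ⟨(⟨p.1.1, p.2.1⟩, ⟨p.1.2, trivial⟩), p.2.2⟩ }
  have hsub : Nat.card (S : Set R) =
      Nat.card (zCenter S) * Nat.card (QuotientAddGroup.mk '' (S : Set R) : Set (R ⧸ zCenter S)) := by
    have h := π.card_preimage_of_surjective hπ (QuotientAddGroup.mk '' (S : Set R))
    rwa [QuotientAddGroup.ker_mk', preimage_image_mk_zCenter] at h
  have hz : (Nat.card (zCenter S) : ℚ) ≠ 0 := Nat.cast_ne_zero.2 Nat.card_pos.ne'
  rw [relCommProb, hpairs, hsub, Nat.card_univ,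
    AddSubgroup.card_eq_card_quotient_mul_card_addSubgroup (zCenter S)]
  push_cast
  field_simp

end QuotientByZCenter

namespace ZIsoclinism

variable {R₁ R₂ : Type*} [NonUnitalRing R₁] [NonUnitalRing R₂]
  {S₁ : NonUnitalSubring R₁} {S₂ : NonUnitalSubring R₂} (e : ZIsoclinism S₁ S₂)

theorem mul_comm_iff {u v : R₁} {u' v' : R₂} (hu : u ∈ S₁) (hu' : u' ∈ S₂)
    (hφu : e.φ u = u') (hφv : e.φ v = v') : u * v = v * u ↔ u' * v' = v' * u' := by
  rw [← sub_eq_zero, ← sub_eq_zero (a := u' * v'), ← e.compat u hu v u' hu' v' hφu hφv,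
    ZeroMemClass.coe_eq_zero, AddEquivClass.map_eq_zero_iff, ← ZeroMemClass.coe_eq_zero]

theorem mem_image_mk_iff (q : R₁ ⧸ zCenter S₁) :
    q ∈ QuotientAddGroup.mk '' (S₁ : Set R₁) ↔ e.φ q ∈ QuotientAddGroup.mk '' (S₂ : Set R₂) := by
  rw [← e.φ_maps, e.φ.injective.mem_set_image]

theorem mem_quotCommPairs_iff (q : (R₁ ⧸ zCenter S₁) × (R₁ ⧸ zCenter S₁)) :
    q ∈ quotCommPairs S₁ ↔ (e.φ q.1, e.φ q.2) ∈ quotCommPairs S₂ := by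
  constructor
  · rintro ⟨u, hu, v, hu_q, hv_q, huv⟩
    obtain ⟨u', hu', hu'_φ⟩ := (e.mem_image_mk_iff q.1).1 ⟨u, hu, hu_q⟩
    obtain ⟨v', hv'_φ⟩ := QuotientAddGroup.mk_surjective (e.φ q.2)
    refine ⟨u', hu', v', hu'_φ, hv'_φ, (e.mul_comm_iff hu hu' ?_ ?_).1 huv⟩
    · rw [hu_q, hu'_φ]
    · rw [hv_q, hv'_φ]
  · rintro ⟨u', hu', v', hu'_φ, hv'_φ, huv'⟩
    obtain ⟨u, hu, hu_q⟩ := (e.mem_image_mk_iff q.1).2 ⟨u', hu', hu'_φ⟩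
    obtain ⟨v, hv_q⟩ := QuotientAddGroup.mk_surjective q.2
    refine ⟨u, hu, v, hu_q, hv_q, (e.mul_comm_iff hu hu' ?_ ?_).2 huv'⟩
    · rw [hu_q, hu'_φ]
    · rw [hv_q, hv'_φ]

end ZIsoclinism

/-- If there is a `ℤ`-isoclinism from `(S₁, R₁)` to `(S₂, R₂)`, where `S₁, S₂` are subrings
of the finite rings `R₁, R₂`, then `Pr(S₁, R₁) = Pr(S₂, R₂)`. -/
theorem relCommProb_eq_of_zIsoclinism {R₁ R₂ : Type*} [NonUnitalRing R₁] [NonUnitalRing R₂]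
    [Fintype R₁] [Fintype R₂] (S₁ : NonUnitalSubring R₁) (S₂ : NonUnitalSubring R₂)
    (e : Nonempty (ZIsoclinism S₁ S₂)) :
    relCommProb R₁ (S₁ : Set R₁) Set.univ = relCommProb R₂ (S₂ : Set R₂) Set.univ := by
  obtain ⟨e⟩ := e
  have hpairs : Nat.card (quotCommPairs S₁) = Nat.card (quotCommPairs S₂) :=
    Nat.card_congr ((e.φ.toEquiv.prodCongr e.φ.toEquiv).subtypeEquiv e.mem_quotCommPairs_iff)
  have hsub := Nat.card_congr (e.φ.toEquiv.subtypeEquiv e.mem_image_mk_iff)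
  rw [relCommProb_univ_eq_card_quotient, relCommProb_univ_eq_card_quotient, hpairs, hsub,
    Nat.card_congr e.φ.toEquiv]
end
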